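/- arXiv:2307.03834 — 2 statements merged into one kernel-verified Lean document; each statement's English description precedes it below -/
import Mathlib

section
/- Let Γ be an infinite discrete subgroup of PSL(3,ℂ) such that the maximum number of lines in general position contained in the Kulkarni limit set Λ(Γ) equals 2. Then Γ has a global fixed point: if ℓ₁ ≠ ℓ₂ are any two distinct lines contained in Λ(Γ), the intersection point ℓ₁ ∩ ℓ₂ is fixed by every element of Γ. -/
set_option maxHeartbeats 1000000
set_option synthInstance.maxHeartbeats 200000

noncomputable section

open Matrix Filter Topology Set Pointwise

/-- `SL(n,ℂ)`. -/
abbrev SL (n : ℕ) := Matrix.SpecialLinearGroup (Fin n) ℂ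

/-- `PSL(n,ℂ) = SL(n,ℂ)/center`. -/
abbrev PSL (n : ℕ) := Matrix.ProjectiveSpecialLinearGroup (Fin n) ℂ

/-- The complex projective space of dimension `n - 1`, as the projectivization of `ℂⁿ`. -/
abbrev Proj (n : ℕ) : Type := Projectivization ℂ (Fin n → ℂ)

/-- The topology on `SL(n,ℂ)` induced from the space of matrices. -/
instance (n : ℕ) : TopologicalSpace (SL n) :=
  inferInstanceAs (TopologicalSpace { A : Matrix (Fin n) (Fin n) ℂ // A.det = 1 })

/-- The quotient topology on projective space. -/
instance (n : ℕ) : TopologicalSpace (Proj n) :=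
  show TopologicalSpace (Quotient (projectivizationSetoid ℂ (Fin n → ℂ))) from
    inferInstance

namespace PSLAct

/-- The action of an element of `SL(n,ℂ)` on projective space. -/
def actP {n : ℕ} (g : SL n) (x : Proj n) : Proj n :=
  Projectivization.map
    ((Matrix.SpecialLinearGroup.toLin' g : (Fin n → ℂ) ≃ₗ[ℂ] (Fin n → ℂ)) :
      (Fin n → ℂ) →ₗ[ℂ] (Fin n → ℂ))
    (Matrix.SpecialLinearGroup.toLin' g).injective x

lemma actP_mk {n : ℕ} (g : SL n) (v : Fin n → ℂ) (hv : v ≠ 0) :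
    actP g (Projectivization.mk ℂ v hv) =
      Projectivization.mk ℂ (Matrix.SpecialLinearGroup.toLin' g v)
        ((Matrix.SpecialLinearGroup.toLin' g).map_ne_zero_iff.mpr hv) := by
  rfl

lemma actP_mul {n : ℕ} (g h : SL n) (x : Proj n) : actP g (actP h x) = actP (g * h) x := by
  induction' x using Projectivization.ind with v hv
  rw [actP_mk, actP_mk, actP_mk]
  rw [Projectivization.mk_eq_mk_iff']
  refine ⟨1, ?_⟩
  rw [one_smul, _root_.map_mul]
  rfl

lemma actP_one {n : ℕ} (x : Proj n) : actP 1 x = x := by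
  induction' x using Projectivization.ind with v hv
  rw [actP_mk]
  rw [Projectivization.mk_eq_mk_iff']
  exact ⟨1, by simp⟩

/-- The action of `SL(n,ℂ)` on projective space, as a homomorphism into permutations. -/
def actSL {n : ℕ} : SL n →* Equiv.Perm (Proj n) where
  toFun g :=
    { toFun := actP g
      invFun := actP g⁻¹
      left_inv := fun x => by rw [actP_mul, inv_mul_cancel, actP_one]
      right_inv := fun x => by rw [actP_mul, mul_inv_cancel, actP_one] }
  map_one' := Equiv.ext fun x => actP_one x
  map_mul' g h := Equiv.ext fun x => (actP_mul g h x).symm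

lemma actSL_center {n : ℕ} (g : SL n) (hg : g ∈ Subgroup.center (SL n)) : actSL g = 1 := by
  obtain ⟨r, hr1, hr⟩ := Matrix.SpecialLinearGroup.mem_center_iff.mp hg
  ext x
  induction' x using Projectivization.ind with v hv
  show actP g (Projectivization.mk ℂ v hv) = Projectivization.mk ℂ v hv
  rw [actP_mk, Projectivization.mk_eq_mk_iff']
  refine ⟨r, ?_⟩
  have : Matrix.SpecialLinearGroup.toLin' g v
      = Matrix.mulVec (g : Matrix (Fin n) (Fin n) ℂ) v := by
    rw [Matrix.SpecialLinearGroup.toLin'_apply, Matrix.toLin'_apply]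
  rw [this, ← hr]
  funext i
  simp [Matrix.scalar_apply, Matrix.mulVec_diagonal]

/-- The action of `PSL(n,ℂ)` on projective space. -/
def act {n : ℕ} : PSL n →* Equiv.Perm (Proj n) :=
  QuotientGroup.lift (Subgroup.center (SL n)) actSL (fun g hg => actSL_center g hg)

instance {n : ℕ} : MulAction (PSL n) (Proj n) := MulAction.compHom (Proj n) act

end PSLAct

/-- A subset of projective space is a (complex projective) line if it is the image of a
2-dimensional complex linear subspace of `ℂⁿ`. -/
def IsLine {n : ℕ} (l : Set (Proj n)) : Prop :=
  ∃ W : Submodule ℂ (Fin n → ℂ), Module.finrank ℂ W = 2 ∧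
    l = {x : Proj n | x.submodule ≤ W}

/-- The orbit of a point under a set of transformations. -/
def setOrbit {n : ℕ} (S : Set (PSL n)) (z : Proj n) : Set (Proj n) :=
  {w : Proj n | ∃ γ ∈ S, γ • z = w}

/-- `L0`: the closure of the set of points with infinite stabilizer. -/
def L0 {n : ℕ} (S : Set (PSL n)) : Set (Proj n) :=
  closure {x : Proj n | {γ : PSL n | γ ∈ S ∧ γ • x = x}.Infinite}

/-- `L1`: the closure of the set of cluster points of orbits of points outside `L0`. -/
def L1 {n : ℕ} (S : Set (PSL n)) : Set (Proj n) :=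
  closure {y : Proj n | ∃ z : Proj n, z ∉ L0 S ∧ AccPt y (Filter.principal (setOrbit S z))}

/-- `L2`: the closure of the union, over compact subsets `K` of the complement of
`L0 ∪ L1`, of the set of points `x` such that every neighborhood of `x` meets `γ • K`
for infinitely many `γ ∈ S`. -/
def L2 {n : ℕ} (S : Set (PSL n)) : Set (Proj n) :=
  closure (⋃ K ∈ {K : Set (Proj n) | IsCompact K ∧ K ⊆ (L0 S ∪ L1 S)ᶜ},
    {x : Proj n | ∀ U ∈ nhds x, {γ : PSL n | γ ∈ S ∧ (U ∩ γ • K).Nonempty}.Infinite})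

/-- The Kulkarni limit set. -/
def kulkarniLimitSet {n : ℕ} (S : Set (PSL n)) : Set (Proj n) := L0 S ∪ L1 S ∪ L2 S

/-- The collection of lines contained in the Kulkarni limit set. -/
def linesIn {n : ℕ} (S : Set (PSL n)) : Set (Set (Proj n)) :=
  {l | IsLine l ∧ l ⊆ kulkarniLimitSet S}

/-- A family of lines is in general position if no three distinct members have a
common point. -/
def InGenPos {n : ℕ} (F : Set (Set (Proj n))) : Prop :=
  ∀ l₁ ∈ F, ∀ l₂ ∈ F, ∀ l₃ ∈ F, l₁ ≠ l₂ → l₁ ≠ l₃ → l₂ ≠ l₃ → l₁ ∩ l₂ ∩ l₃ = ∅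

/-- The set of `k : ℕ` such that the Kulkarni limit set contains `k` distinct lines in
general position. -/
def genPosCounts {n : ℕ} (S : Set (PSL n)) : Set ℕ :=
  {k : ℕ | ∃ F : Finset (Set (Proj n)), F.card = k ∧ ↑F ⊆ linesIn S ∧ InGenPos (↑F : Set (Set (Proj n)))}

/-- The maximum number of lines in general position contained in the Kulkarni limit
set is exactly `k`. -/
def maxGenPos {n : ℕ} (S : Set (PSL n)) (k : ℕ) : Prop := IsGreatest (genPosCounts S) k

/-- `γ ∈ PSL(n,ℂ)` is the class of the matrix `M` (after rescaling to determinant one). -/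
def Represents {n : ℕ} (γ : PSL n) (M : Matrix (Fin n) (Fin n) ℂ) : Prop :=
  ∃ g : SL n, QuotientGroup.mk g = γ ∧
    ∃ c : ℂ, c ≠ 0 ∧ (g : Matrix (Fin n) (Fin n) ℂ) = c • M

/-- The line through two points of projective space. -/
def lineThrough {n : ℕ} (p q : Proj n) : Set (Proj n) :=
  {x : Proj n | x.submodule ≤ p.submodule ⊔ q.submodule}

/-- The standard basis points of projective space. -/
def stdPt {n : ℕ} [NeZero n] (i : Fin n) : Proj n :=
  Projectivization.mk ℂ (Pi.single i 1)
    (fun h => one_ne_zero (α := ℂ) (by simpa using congrFun h i))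

/-- A group is virtually solvable if it has a solvable subgroup of finite index. -/
def VirtuallySolvable (G : Type*) [Group G] : Prop :=
  ∃ H : Subgroup G, H.FiniteIndex ∧ IsSolvable H

/-
Every element of `Γ` maps the Kulkarni limit set into itself and lines to lines, so it permutes
the lines contained in `Λ(Γ)`. If `Λ(Γ)` contains no three lines in general position, any
three of its lines are concurrent; since two distinct lines meet in exactly one point, every
line of `Λ(Γ)` passes through the point `p = ℓ₁ ∩ ℓ₂`. Hence for `γ ∈ Γ` both `γ • ℓ₁` and
`γ • ℓ₂` pass through `p` as well as through `γ • p`, and these two lines are distinct, so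
`γ • p = p`.
-/

namespace PSLAct

variable {n : ℕ}

lemma continuous_actP (g : SL n) : Continuous (actP g) := by
  refine isQuotientMap_quotient_mk'.continuous_iff.mpr ?_
  have hg : Continuous fun v : {v : Fin n → ℂ // v ≠ 0} =>
      (Matrix.SpecialLinearGroup.toLin' g : (Fin n → ℂ) →ₗ[ℂ] (Fin n → ℂ)) v.1 :=
    (LinearMap.continuous_of_finiteDimensional _).comp continuous_subtype_val
  exact continuous_quotient_mk'.comp (hg.subtype_mk _)

instance : ContinuousConstSMul (PSL n) (Proj n) where
  continuous_const_smul γ := by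
    induction γ using QuotientGroup.induction_on with
    | H g => exact continuous_actP g

lemma submodule_actP (g : SL n) (x : Proj n) :
    (actP g x).submodule =
      x.submodule.map (Matrix.SpecialLinearGroup.toLin' g : (Fin n → ℂ) →ₗ[ℂ] (Fin n → ℂ)) := by
  induction x using Projectivization.ind with
  | h v hv =>
    rw [actP_mk, Projectivization.submodule_mk, Projectivization.submodule_mk,
      Submodule.map_span, Set.image_singleton]
    rfl

end PSLAct

open PSLAct

section Lines

variable {n : ℕ} {l₁ l₂ : Set (Proj n)}

lemma IsLine.smul {l : Set (Proj n)} (h : IsLine l) (γ : PSL n) : IsLine (γ • l) := by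
  induction γ using QuotientGroup.induction_on with
  | H g =>
    obtain ⟨W, hW, rfl⟩ := h
    set e := Matrix.SpecialLinearGroup.toLin' g
    refine ⟨W.map (e : (Fin n → ℂ) →ₗ[ℂ] (Fin n → ℂ)), by rwa [LinearEquiv.finrank_map_eq], ?_⟩
    ext x
    rw [Set.mem_smul_set_iff_inv_smul_mem, ← QuotientGroup.mk_inv]
    change (actP g⁻¹ x).submodule ≤ W ↔ _
    rw [submodule_actP, map_inv, Submodule.map_le_iff_le_comap, Submodule.map_equiv_eq_comap_symm]
    rfl

lemma IsLine.inter_subsingleton (h₁ : IsLine l₁) (h₂ : IsLine l₂) (hne : l₁ ≠ l₂) :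
    (l₁ ∩ l₂).Subsingleton := by
  obtain ⟨W₁, hW₁, rfl⟩ := h₁
  obtain ⟨W₂, hW₂, rfl⟩ := h₂
  have hinf : Module.finrank ℂ ↥(W₁ ⊓ W₂) ≤ 1 := by
    by_contra! h
    have hle : 2 ≤ Module.finrank ℂ ↥(W₁ ⊓ W₂) := h
    have e₁ := Submodule.eq_of_le_of_finrank_le inf_le_left (hW₁ ▸ hle)
    have e₂ := Submodule.eq_of_le_of_finrank_le inf_le_right (hW₂ ▸ hle)
    exact hne (by rw [← e₁, e₂])
  have hpoint : ∀ x ∈ {x : Proj n | x.submodule ≤ W₁} ∩ {x | x.submodule ≤ W₂},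
      x.submodule = W₁ ⊓ W₂ := fun x hx =>
    Submodule.eq_of_le_of_finrank_le (le_inf hx.1 hx.2) (x.finrank_submodule ▸ hinf)
  exact fun p hp q hq => Projectivization.submodule_injective ((hpoint p hp).trans (hpoint q hq).symm)

end Lines

section Invariance

variable {n : ℕ} {Γ : Subgroup (PSL n)} {γ : PSL n}

lemma smul_L0_subset (hγ : γ ∈ Γ) : γ • L0 (Γ : Set (PSL n)) ⊆ L0 (Γ : Set (PSL n)) := by
  rw [L0, ← closure_smul]
  refine closure_mono ?_
  rintro _ ⟨x, hx, rfl⟩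
  have hconj : Function.Injective fun δ : PSL n => γ * δ * γ⁻¹ := fun a b hab => by
    simpa using hab
  refine (hx.image hconj.injOn).mono ?_
  rintro _ ⟨δ, ⟨hδ, hδx⟩, rfl⟩
  refine ⟨Γ.mul_mem (Γ.mul_mem hγ hδ) (Γ.inv_mem hγ), ?_⟩
  simp only [mul_smul, inv_smul_smul, hδx]

lemma smul_setOrbit_subset (hγ : γ ∈ Γ) (z : Proj n) :
    γ • setOrbit (Γ : Set (PSL n)) z ⊆ setOrbit (Γ : Set (PSL n)) z := by
  rintro _ ⟨_, ⟨δ, hδ, rfl⟩, rfl⟩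
  exact ⟨γ * δ, Γ.mul_mem hγ hδ, mul_smul γ δ z⟩

lemma smul_L1_subset (hγ : γ ∈ Γ) : γ • L1 (Γ : Set (PSL n)) ⊆ L1 (Γ : Set (PSL n)) := by
  rw [L1, ← closure_smul]
  refine closure_mono ?_
  rintro _ ⟨y, ⟨z, hz, hacc⟩, rfl⟩
  refine ⟨z, hz, ?_⟩
  have hmap := hacc.map (continuous_const_smul γ).continuousAt (MulAction.injective γ)
  rw [Filter.map_principal, Set.image_smul] at hmap
  exact hmap.mono (Filter.principal_mono.mpr (smul_setOrbit_subset hγ z))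

lemma smul_L2_subset (hγ : γ ∈ Γ) : γ • L2 (Γ : Set (PSL n)) ⊆ L2 (Γ : Set (PSL n)) := by
  rw [L2, ← closure_smul, Set.smul_set_iUnion₂]
  refine closure_mono (Set.iUnion₂_mono fun K _ => ?_)
  rintro _ ⟨x, hx, rfl⟩ U hU
  have hU' : γ⁻¹ • U ∈ 𝓝 x := by
    rwa [← smul_mem_nhds_smul_iff γ, smul_inv_smul]
  refine ((hx _ hU').image (mul_right_injective γ).injOn).mono ?_
  rintro _ ⟨δ, ⟨hδ, w, hwU, hwK⟩, rfl⟩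
  refine ⟨Γ.mul_mem hγ hδ, γ • w, ?_, ?_⟩
  · rwa [Set.mem_smul_set_iff_inv_smul_mem, inv_inv] at hwU
  · rw [mul_smul]
    exact Set.smul_mem_smul_set hwK

lemma smul_kulkarniLimitSet_subset (hγ : γ ∈ Γ) :
    γ • kulkarniLimitSet (Γ : Set (PSL n)) ⊆ kulkarniLimitSet (Γ : Set (PSL n)) := by
  rw [kulkarniLimitSet, Set.smul_set_union, Set.smul_set_union]
  exact Set.union_subset_union
    (Set.union_subset_union (smul_L0_subset hγ) (smul_L1_subset hγ)) (smul_L2_subset hγ)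

lemma smul_mem_linesIn (hγ : γ ∈ Γ) {l : Set (Proj n)} (hl : l ∈ linesIn (Γ : Set (PSL n))) :
    γ • l ∈ linesIn (Γ : Set (PSL n)) :=
  ⟨hl.1.smul γ, (Set.smul_set_mono hl.2).trans (smul_kulkarniLimitSet_subset hγ)⟩

end Invariance

section GeneralPosition

variable {n : ℕ} {S : Set (PSL n)} {l₁ l₂ l₃ : Set (Proj n)}

lemma inGenPos_triple (h : l₁ ∩ l₂ ∩ l₃ = ∅) : InGenPos {l₁, l₂, l₃} := by
  intro a ha b hb c hc hab hac hbc
  simp only [Set.mem_insert_iff, Set.mem_singleton_iff] at ha hb hc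
  rcases ha with rfl | rfl | rfl <;> rcases hb with rfl | rfl | rfl <;>
    rcases hc with rfl | rfl | rfl <;> simp_all [Set.inter_comm, Set.inter_left_comm]

lemma inter_nonempty_of_maxGenPos_two (hmax : maxGenPos S 2) (h₁ : l₁ ∈ linesIn S)
    (h₂ : l₂ ∈ linesIn S) (h₃ : l₃ ∈ linesIn S) (h₁₂ : l₁ ≠ l₂) (h₁₃ : l₁ ≠ l₃)
    (h₂₃ : l₂ ≠ l₃) : (l₁ ∩ l₂ ∩ l₃).Nonempty := by
  classical
  by_contra hempty
  have h3 : 3 ∈ genPosCounts S := by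
    refine ⟨{l₁, l₂, l₃}, Finset.card_eq_three.mpr ⟨l₁, l₂, l₃, h₁₂, h₁₃, h₂₃, rfl⟩, ?_, ?_⟩
    · simp [Set.insert_subset_iff, h₁, h₂, h₃]
    · simpa using inGenPos_triple (Set.not_nonempty_iff_eq_empty.mp hempty)
  exact absurd (hmax.2 h3) (by norm_num)

lemma mem_of_maxGenPos_two (hmax : maxGenPos S 2) (h₁ : l₁ ∈ linesIn S) (h₂ : l₂ ∈ linesIn S)
    (hne : l₁ ≠ l₂) {p : Proj n} (hp : p ∈ l₁ ∩ l₂) {l : Set (Proj n)} (hl : l ∈ linesIn S) :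
    p ∈ l := by
  by_cases hl₁ : l₁ = l
  · exact hl₁ ▸ hp.1
  by_cases hl₂ : l₂ = l
  · exact hl₂ ▸ hp.2
  obtain ⟨q, ⟨hq₁, hq₂⟩, hq⟩ := inter_nonempty_of_maxGenPos_two hmax h₁ h₂ hl hne hl₁ hl₂
  rwa [(h₁.1.inter_subsingleton h₂.1 hne) hp ⟨hq₁, hq₂⟩]

end GeneralPosition

theorem two_lines_global_fixed_point_general (Γ : Subgroup (PSL 3))
    (hmax : maxGenPos (Γ : Set (PSL 3)) 2) :
    ∀ l₁ ∈ linesIn (Γ : Set (PSL 3)), ∀ l₂ ∈ linesIn (Γ : Set (PSL 3)), l₁ ≠ l₂ →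
      ∀ p ∈ l₁ ∩ l₂, ∀ γ ∈ Γ, γ • p = p := by
  intro l₁ hl₁ l₂ hl₂ hne p hp γ hγ
  have hγl₁ := smul_mem_linesIn hγ hl₁
  have hγl₂ := smul_mem_linesIn hγ hl₂
  have hγne : γ • l₁ ≠ γ • l₂ := fun h => hne (MulAction.injective γ h)
  exact hγl₁.1.inter_subsingleton hγl₂.1 hγne
    ⟨Set.smul_mem_smul_set hp.1, Set.smul_mem_smul_set hp.2⟩
    ⟨mem_of_maxGenPos_two hmax hl₁ hl₂ hne hp hγl₁, mem_of_maxGenPos_two hmax hl₁ hl₂ hne hp hγl₂⟩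

/-- If the maximal number of lines in general position in the Kulkarni
limit set of an infinite discrete subgroup `Γ` of `PSL(3,ℂ)` is two, then the
intersection point of any two distinct lines of the limit set is a global fixed point
of `Γ`. -/
theorem two_lines_global_fixed_point (Γ : Subgroup (PSL 3))
    (hinf : (Γ : Set (PSL 3)).Infinite) (hdisc : DiscreteTopology Γ)
    (hmax : maxGenPos (Γ : Set (PSL 3)) 2) :
    ∀ l₁ ∈ linesIn (Γ : Set (PSL 3)), ∀ l₂ ∈ linesIn (Γ : Set (PSL 3)), l₁ ≠ l₂ →
      ∀ p ∈ l₁ ∩ l₂, ∀ γ ∈ Γ, γ • p = p :=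
  two_lines_global_fixed_point_general Γ hmax
end
end

section
/- Let Γ be a discrete subgroup of PSL(3,ℂ) such that every element of Γ fixes the point [e₁] = [1:0:0], leaves invariant the line ℓ = {[0:z:w]}, and such that the maximum number of lines in general position contained in the Kulkarni limit set Λ(Γ) equals 3. Let Π : Γ → PSL(2,ℂ) be the homomorphism given by restricting the action of Γ to ℓ, identified with ℙ¹ℂ via [0:z:w] ↦ [z:w]. If the image Π(Γ) is not virtually solvable, then Π(Γ) is a discrete subgroup of PSL(2,ℂ). -/
set_option maxHeartbeats 1000000
set_option synthInstance.maxHeartbeats 200000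

noncomputable section

open Matrix Filter Topology Set Pointwise

/-- The linear embedding `ℂ² → ℂ³`, `v ↦ (0, v 0, v 1)`. -/
def embL : (Fin 2 → ℂ) →ₗ[ℂ] (Fin 3 → ℂ) where
  toFun v := ![0, v 0, v 1]
  map_add' v w := by funext i; fin_cases i <;> simp
  map_smul' c v := by funext i; fin_cases i <;> simp

lemma embL_injective : Function.Injective embL := by
  intro v w h
  funext i
  fin_cases i
  · simpa [embL] using congrFun h 1
  · simpa [embL] using congrFun h 2

/-- The embedding of `ℙ¹ℂ` onto the line `{[0:z:w]}` of `ℙ²ℂ`, given by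
`[z:w] ↦ [0:z:w]`. -/
def embP1 : Proj 2 → Proj 3 := Projectivization.map embL embL_injective

/-- The limit set of a subgroup of `PSL(2,ℂ)` acting on `ℙ¹ℂ`: the set of cluster
points of the orbits. -/
def limitSetP1 (S : Subgroup (PSL 2)) : Set (Proj 2) :=
  {y : Proj 2 | ∃ z : Proj 2, AccPt y (Filter.principal (setOrbit (S : Set (PSL 2)) z))}

open scoped commutatorElement

/-!
Fixing `[e₁]` and preserving `ℓ` forces every `γ ∈ Γ` to lift to a block matrix `diag(a, μ D)`
with `[D] = Φ γ`, so `⁅γ, δ⁆ = [diag(1, ⁅D, E⁆)]` depends continuously on the lifts `D, E` in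
`SL(2,ℂ)`. Since `Γ` is discrete, an element of `Φ(Γ)` close enough to `1` therefore commutes
with any given element of `Φ(Γ)`. If `Φ(Γ)` were not discrete, any four of its elements would
commute with a common nontrivial `g = [A]`. On the preimage of the centralizer of `g`,
`X ↦ ⁅X, A⁆` is a homomorphism to the centre of `SL(2,ℂ)`, so commutators of such elements
commute with `A`; and the centralizer of the non-scalar matrix `A` is commutative. Hence `Φ(Γ)`
would be metabelian, in particular solvable.
-/
-- `SL n` carries its own (definitionally equal) topology, so Mathlib's instance is not found.
instance (n : ℕ) : IsTopologicalGroup (SL n) := Matrix.SpecialLinearGroup.topologicalGroup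

section CentralQuotient

open Subgroup QuotientGroup

variable {H : Type*} [Group H]

lemma mem_comap_centralizer_iff_commutatorElement_mem_center {X A : H} :
    X ∈ (Subgroup.centralizer {(A : H ⧸ Subgroup.center H)}).comap (mk' (Subgroup.center H)) ↔
      ⁅X, A⁆ ∈ Subgroup.center H := by
  rw [Subgroup.mem_comap, mem_centralizer_singleton_iff, ← eq_one_iff,
    show ((⁅X, A⁆ : H) : H ⧸ Subgroup.center H) = ⁅mk' _ X, mk' _ A⁆ from
      map_commutatorElement (mk' _) X A, commutatorElement_eq_one_iff_mul_comm]
  exact Iff.rfl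

lemma commutatorElement_mul_left_of_mem_center {X Y A : H}
    (hY : ⁅Y, A⁆ ∈ Subgroup.center H) : ⁅X * Y, A⁆ = ⁅X, A⁆ * ⁅Y, A⁆ := by
  have hY' := Subgroup.mem_center_iff.1 hY
  calc ⁅X * Y, A⁆ = X * ⁅Y, A⁆ * X⁻¹ * ⁅X, A⁆ := commutatorElement_mul_left_eq_conj_mul X Y A
    _ = ⁅Y, A⁆ * ⁅X, A⁆ := by rw [hY' X]; group
    _ = ⁅X, A⁆ * ⁅Y, A⁆ := (hY' _).symm

def commutatorRightHom (A : H) :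
    (Subgroup.centralizer {(A : H ⧸ Subgroup.center H)}).comap (mk' (Subgroup.center H)) →*
      Subgroup.center H :=
  MonoidHom.mk'
    (fun X => ⟨⁅(X : H), A⁆, mem_comap_centralizer_iff_commutatorElement_mem_center.1 X.2⟩)
    fun _ Y => Subtype.ext (commutatorElement_mul_left_of_mem_center
      (mem_comap_centralizer_iff_commutatorElement_mem_center.1 Y.2))

lemma commute_commutatorElement_of_commute_mk {A X Y : H}
    (hX : Commute (X : H ⧸ Subgroup.center H) A) (hY : Commute (Y : H ⧸ Subgroup.center H) A) :
    Commute ⁅X, Y⁆ A := by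
  set f := commutatorRightHom A
  have hXY : ⁅f ⟨X, mem_centralizer_singleton_iff.2 hX⟩, f ⟨Y, mem_centralizer_singleton_iff.2 hY⟩⁆
      = 1 :=
    commutatorElement_eq_one_iff_mul_comm.2 (Subtype.ext (Subgroup.mem_center_iff.1 (f _).2 _))
  exact commutatorElement_eq_one_iff_commute.1
    (congrArg Subtype.val ((map_commutatorElement f _ _).trans hXY))

end CentralQuotient

theorem isSolvable_of_commute_commutatorElement {G : Type*} [Group G]
    (h : ∀ a b c d : G, Commute ⁅a, b⁆ ⁅c, d⁆) : Group.IsSolvable G := by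
  refine (Group.isSolvable_def G).2 ⟨2, ?_⟩
  rw [derivedSeries_succ, derivedSeries_one, Subgroup.commutator_eq_bot_iff_le_centralizer,
    commutator_eq_closure, Subgroup.centralizer_closure, Subgroup.closure_le]
  rintro _ ⟨a, b, rfl⟩
  rw [SetLike.mem_coe, Subgroup.mem_centralizer_iff]
  rintro _ ⟨c, d, rfl⟩
  exact h c d a b

theorem Subgroup.discreteTopology_iff_eventually_eq_one {G : Type*} [TopologicalSpace G]
    [Group G] [IsTopologicalGroup G] (H : Subgroup G) :
    DiscreteTopology H ↔ ∀ᶠ x in 𝓝 (1 : G), x ∈ H → x = 1 := by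
  simp only [discreteTopology_iff_isOpen_singleton_one, isOpen_iff_mem_nhds,
    Set.mem_singleton_iff, forall_eq]
  rw [nhds_subtype, Filter.mem_comap']
  refine Filter.eventually_congr (Filter.Eventually.of_forall fun x => ?_)
  constructor
  · exact fun h hx => congrArg Subtype.val (h (x := ⟨x, hx⟩) rfl)
  · rintro h ⟨y, hy⟩ rfl
    exact Subtype.ext (h hy)

theorem Projectivization.exists_eq_smul_of_map_eq {K V W : Type*} [Field K] [AddCommGroup V]
    [Module K V] [AddCommGroup W] [Module K W] {f g : V →ₗ[K] W} (hf : Function.Injective f)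
    (hg : Function.Injective g) (h : ∀ x, map f hf x = map g hg x) :
    ∃ c : K, f = c • g := by
  have pointwise : ∀ v, ∃ c : K, f v = c • g v := by
    intro v
    by_cases hv : v = 0
    · exact ⟨0, by simp [hv]⟩
    have hx := h (mk K v hv)
    rw [map_mk, map_mk, mk_eq_mk_iff'] at hx
    obtain ⟨c, hc⟩ := hx
    exact ⟨c, hc.symm⟩
  obtain ⟨r, hr⟩ := g.exists_leftInverse_of_injective (LinearMap.ker_eq_bot.2 hg)
  have hrg : ∀ v, r (g v) = v := fun v => LinearMap.congr_fun hr v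
  obtain ⟨c, hc⟩ := (r ∘ₗ f).exists_eq_smul_id_of_forall_notLinearIndependent fun v => by
    obtain ⟨cv, hcv⟩ := pointwise v
    by_cases hv : v = 0
    · exact fun hli => hli.ne_zero 0 (by simp [hv])
    rw [LinearIndependent.pair_iff' hv, not_forall_not]
    exact ⟨cv, by simp [hcv, hrg]⟩
  refine ⟨c, LinearMap.ext fun v => ?_⟩
  obtain ⟨cv, hcv⟩ := pointwise v
  by_cases hv : v = 0
  · simp [hv]
  have hcv' : cv • v = c • v := by simpa [hcv, hrg] using LinearMap.congr_fun hc v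
  rw [hcv, smul_left_injective K hv hcv', LinearMap.smul_apply]

namespace Matrix

/-- Coordinates of the trace-free part of a `2 × 2` matrix, in which the commutator of
`𝔰𝔩₂` becomes the cross product (`𝔰𝔩₂ ≅ 𝔰𝔬₃`). -/
def slTwoCoords {R : Type*} [Ring R] (M : Matrix (Fin 2) (Fin 2) R) : Fin 3 → R :=
  ![M 0 1, M 1 0, M 0 0 - M 1 1]

lemma commute_iff_slTwoCoords_cross_eq_zero {R : Type*} [CommRing R]
    {M N : Matrix (Fin 2) (Fin 2) R} :
    Commute M N ↔ slTwoCoords M ⨯₃ slTwoCoords N = 0 := by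
  set c := slTwoCoords M ⨯₃ slTwoCoords N with hc
  have hcomm : M * N - N * M = !![c 2, c 1; c 0, -c 2] := by
    ext i j
    fin_cases i <;> fin_cases j <;>
      simp [hc, slTwoCoords, cross_apply, Matrix.mul_apply, Fin.sum_univ_two] <;> ring
  rw [Commute, SemiconjBy, ← sub_eq_zero, hcomm]
  constructor
  · intro h
    ext i
    fin_cases i
    · simpa using congrFun (congrFun h 1) 0
    · simpa using congrFun (congrFun h 0) 1
    · simpa using congrFun (congrFun h 0) 0
  · intro h
    ext i j
    fin_cases i <;> fin_cases j <;> simp [h]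

lemma slTwoCoords_eq_zero_iff {R : Type*} [Ring R] {M : Matrix (Fin 2) (Fin 2) R} :
    slTwoCoords M = 0 ↔ M = scalar (Fin 2) (M 1 1) := by
  constructor
  · intro h
    have h0 := congrFun h 0
    have h1 := congrFun h 1
    have h2 := congrFun h 2
    simp only [slTwoCoords, Fin.isValue, cons_val, Pi.zero_apply] at h0 h1 h2
    ext i j
    fin_cases i <;> fin_cases j <;> simp [h0, h1, sub_eq_zero.1 h2]
  · intro h
    rw [h]
    ext i
    fin_cases i <;> simp [slTwoCoords]

theorem commute_of_commute_of_ne_scalar {K : Type*} [Field K] {A M N : Matrix (Fin 2) (Fin 2) K}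
    (hA : ∀ r, A ≠ scalar (Fin 2) r) (hM : Commute M A) (hN : Commute N A) : Commute M N := by
  rw [commute_iff_slTwoCoords_cross_eq_zero] at hM hN ⊢
  have hw : slTwoCoords A ≠ 0 := fun h => hA _ (slTwoCoords_eq_zero_iff.1 h)
  by_cases hu : slTwoCoords M = 0
  · simp [hu]
  by_cases hv : slTwoCoords N = 0
  · simp [hv]
  rw [← Projectivization.mk_eq_mk_iff_crossProduct_eq_zero hu hv,
    (Projectivization.mk_eq_mk_iff_crossProduct_eq_zero hu hw).2 hM,
    (Projectivization.mk_eq_mk_iff_crossProduct_eq_zero hv hw).2 hN]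

theorem SpecialLinearGroup.commute_of_commute_of_notMem_center {K : Type*} [Field K]
    {A X Y : SpecialLinearGroup (Fin 2) K}
    (hA : A ∉ Subgroup.center (SpecialLinearGroup (Fin 2) K)) (hX : Commute X A)
    (hY : Commute Y A) : Commute X Y := by
  have hA' : ∀ r, (A : Matrix (Fin 2) (Fin 2) K) ≠ scalar (Fin 2) r := fun r hr =>
    hA (SpecialLinearGroup.mem_center_iff.2 ⟨r, by simpa [hr, sq] using A.det_coe, hr.symm⟩)
  exact SpecialLinearGroup.coeMonoidHom_injective (commute_of_commute_of_ne_scalar hA'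
    (hX.map SpecialLinearGroup.coeMonoidHom) (hY.map SpecialLinearGroup.coeMonoidHom)).eq

theorem ProjectiveSpecialLinearGroup.commute_commutatorElement_of_commute
    {K : Type*} [Field K] {g a b c d : ProjectiveSpecialLinearGroup (Fin 2) K} (hg : g ≠ 1)
    (ha : Commute a g) (hb : Commute b g) (hc : Commute c g) (hd : Commute d g) :
    Commute ⁅a, b⁆ ⁅c, d⁆ := by
  obtain ⟨A, rfl⟩ := QuotientGroup.mk_surjective g
  obtain ⟨X, rfl⟩ := QuotientGroup.mk_surjective a
  obtain ⟨Y, rfl⟩ := QuotientGroup.mk_surjective b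
  obtain ⟨Z, rfl⟩ := QuotientGroup.mk_surjective c
  obtain ⟨W, rfl⟩ := QuotientGroup.mk_surjective d
  have hA : A ∉ Subgroup.center _ := fun h => hg ((QuotientGroup.eq_one_iff A).2 h)
  have key := (SpecialLinearGroup.commute_of_commute_of_notMem_center hA
    (commute_commutatorElement_of_commute_mk ha hb)
    (commute_commutatorElement_of_commute_mk hc hd)).map
    (QuotientGroup.mk' (Subgroup.center (SpecialLinearGroup (Fin 2) K)))
  simp only [map_commutatorElement] at key
  exact key

end Matrix

section BlockDiagonal

variable {R : Type*}

def diagBlock [Zero R] (a : R) (M : Matrix (Fin 2) (Fin 2) R) : Matrix (Fin 3) (Fin 3) R :=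
  !![a, 0, 0; 0, M 0 0, M 0 1; 0, M 1 0, M 1 1]

lemma diagBlock_succ_succ [Zero R] (a : R) (M : Matrix (Fin 2) (Fin 2) R) (i j : Fin 2) :
    diagBlock a M i.succ j.succ = M i j := by
  fin_cases i <;> fin_cases j <;> rfl

lemma diagBlock_mul [Semiring R] (a b : R) (M N : Matrix (Fin 2) (Fin 2) R) :
    diagBlock a M * diagBlock b N = diagBlock (a * b) (M * N) := by
  ext i j
  fin_cases i <;> fin_cases j <;> simp [diagBlock, Matrix.mul_apply, Fin.sum_univ_succ]

lemma diagBlock_one [Semiring R] : diagBlock (1 : R) 1 = 1 := by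
  ext i j
  fin_cases i <;> fin_cases j <;> simp [diagBlock]

lemma det_diagBlock [CommRing R] (a : R) (M : Matrix (Fin 2) (Fin 2) R) :
    (diagBlock a M).det = a * M.det := by
  simp only [diagBlock, det_fin_three, det_fin_two, of_apply, cons_val', cons_val_zero,
    cons_val_one, cons_val, cons_val_fin_one, Fin.isValue, mul_zero, zero_mul, sub_zero, add_zero]
  ring

lemma diagBlock_mulVec_single_zero [Semiring R] (a : R) (M : Matrix (Fin 2) (Fin 2) R) :
    diagBlock a M *ᵥ Pi.single 0 1 = a • Pi.single 0 1 := by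
  ext i
  fin_cases i <;> simp [diagBlock, mulVec, dotProduct, Fin.sum_univ_succ]

lemma diagBlock_mulVec_embL (a : ℂ) (M : Matrix (Fin 2) (Fin 2) ℂ) (v : Fin 2 → ℂ) :
    diagBlock a M *ᵥ embL v = embL (M *ᵥ v) := by
  ext i
  fin_cases i <;> simp [diagBlock, embL, mulVec, dotProduct, Fin.sum_univ_succ]

end BlockDiagonal

lemma embL_single (i : Fin 2) : embL (Pi.single i 1) = Pi.single i.succ 1 := by
  ext j
  fin_cases i <;> fin_cases j <;> simp [embL]

def blockEmbedding : SL 2 →* SL 3 where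
  toFun C := ⟨diagBlock 1 C, by rw [det_diagBlock, C.det_coe, one_mul]⟩
  map_one' := Subtype.ext diagBlock_one
  map_mul' C D := Subtype.ext <| by
    change diagBlock (1 : ℂ) ↑(C * D) = diagBlock 1 ↑C * diagBlock 1 ↑D
    rw [diagBlock_mul, one_mul, Matrix.SpecialLinearGroup.coe_mul]

lemma coe_blockEmbedding (C : SL 2) :
    (blockEmbedding C : Matrix (Fin 3) (Fin 3) ℂ) = diagBlock 1 C :=
  rfl

lemma continuous_blockEmbedding : Continuous blockEmbedding := by
  refine continuous_induced_rng.2 (continuous_matrix fun i j => ?_)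
  change Continuous fun C : SL 2 => diagBlock 1 (C : Matrix (Fin 2) (Fin 2) ℂ) i j
  fin_cases i <;> fin_cases j <;> simp [diagBlock] <;> fun_prop

lemma eq_one_of_blockEmbedding_mem_center {C : SL 2}
    (h : blockEmbedding C ∈ Subgroup.center (SL 3)) : C = 1 := by
  obtain ⟨r, -, hr⟩ := Matrix.SpecialLinearGroup.mem_center_iff.1 h
  have hr1 : r = 1 := by simpa [coe_blockEmbedding, diagBlock] using congrFun (congrFun hr 0) 0
  ext i j
  simpa [hr1, coe_blockEmbedding, diagBlock_succ_succ, one_apply] using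
    (congrFun (congrFun hr i.succ) j.succ).symm

section BlockForm

variable {g h : SL 3} {D E : SL 2} {a b μ ν : ℂ}

lemma ne_zero_of_coe_eq_diagBlock (hg : (g : Matrix (Fin 3) (Fin 3) ℂ) = diagBlock a (μ • D)) :
    a ≠ 0 ∧ μ ≠ 0 := by
  have hdet : a * μ ^ 2 = 1 := by
    simpa [hg, det_diagBlock, det_smul] using g.det_coe
  exact ⟨left_ne_zero_of_mul_eq_one hdet,
    pow_ne_zero_iff two_ne_zero |>.1 (right_ne_zero_of_mul_eq_one hdet)⟩

lemma coe_inv_of_coe_eq_diagBlock (hg : (g : Matrix (Fin 3) (Fin 3) ℂ) = diagBlock a (μ • D)) :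
    ((g⁻¹ : SL 3) : Matrix (Fin 3) (Fin 3) ℂ) = diagBlock a⁻¹ (μ⁻¹ • (D⁻¹ : SL 2)) := by
  obtain ⟨ha, hμ⟩ := ne_zero_of_coe_eq_diagBlock hg
  refine left_inv_eq_right_inv (a := (g : Matrix (Fin 3) (Fin 3) ℂ)) ?_ ?_
  · rw [← Matrix.SpecialLinearGroup.coe_mul, inv_mul_cancel, Matrix.SpecialLinearGroup.coe_one]
  · rw [hg, diagBlock_mul, smul_mul_smul_comm, ← Matrix.SpecialLinearGroup.coe_mul,
      mul_inv_cancel, Matrix.SpecialLinearGroup.coe_one, mul_inv_cancel₀ ha, mul_inv_cancel₀ hμ,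
      one_smul, diagBlock_one]

lemma commutatorElement_eq_blockEmbedding
    (hg : (g : Matrix (Fin 3) (Fin 3) ℂ) = diagBlock a (μ • D))
    (hh : (h : Matrix (Fin 3) (Fin 3) ℂ) = diagBlock b (ν • E)) :
    ⁅g, h⁆ = blockEmbedding ⁅D, E⁆ := by
  obtain ⟨ha, hμ⟩ := ne_zero_of_coe_eq_diagBlock hg
  obtain ⟨hb, hν⟩ := ne_zero_of_coe_eq_diagBlock hh
  apply Subtype.ext
  simp only [commutatorElement_def, Matrix.SpecialLinearGroup.coe_mul,
    coe_inv_of_coe_eq_diagBlock hg, coe_inv_of_coe_eq_diagBlock hh, hg, hh, diagBlock_mul,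
    smul_mul_smul_comm, coe_blockEmbedding]
  congr 1
  · field_simp
  · rw [show μ * ν * μ⁻¹ * ν⁻¹ = 1 by field_simp, one_smul]

lemma toLin'_apply_eq_mulVec {n : ℕ} (g : SL n) (v : Fin n → ℂ) :
    Matrix.SpecialLinearGroup.toLin' g v = (g : Matrix (Fin n) (Fin n) ℂ) *ᵥ v := by
  rw [Matrix.SpecialLinearGroup.toLin'_apply, Matrix.toLin'_apply]

lemma exists_coe_eq_diagBlock
    (hfix : (QuotientGroup.mk g : PSL 3) • stdPt (0 : Fin 3) = stdPt 0)
    (hline : ∀ x,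
      (QuotientGroup.mk g : PSL 3) • embP1 x = embP1 ((QuotientGroup.mk D : PSL 2) • x)) :
    ∃ a μ : ℂ, (g : Matrix (Fin 3) (Fin 3) ℂ) = diagBlock a (μ • D) := by
  obtain ⟨a, ha⟩ :
      ∃ a : ℂ, a • Pi.single 0 1 = (g : Matrix (Fin 3) (Fin 3) ℂ) *ᵥ Pi.single 0 1 := by
    change PSLAct.actP g (stdPt 0) = stdPt 0 at hfix
    rwa [stdPt, PSLAct.actP_mk, Projectivization.mk_eq_mk_iff', toLin'_apply_eq_mulVec] at hfix
  obtain ⟨μ, hμ⟩ := Projectivization.exists_eq_smul_of_map_eq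
    (f := (Matrix.SpecialLinearGroup.toLin' g).toLinearMap ∘ₗ embL)
    (g := embL ∘ₗ (Matrix.SpecialLinearGroup.toLin' D).toLinearMap)
    ((Matrix.SpecialLinearGroup.toLin' g).injective.comp embL_injective)
    (embL_injective.comp (Matrix.SpecialLinearGroup.toLin' D).injective)
    (fun x => by
      rw [Projectivization.map_comp, Projectivization.map_comp]
      exacts [hline x, (Matrix.SpecialLinearGroup.toLin' D).injective,
        (Matrix.SpecialLinearGroup.toLin' g).injective])
  have hline' : ∀ v,
      (g : Matrix (Fin 3) (Fin 3) ℂ) *ᵥ embL v = diagBlock a (μ • D) *ᵥ embL v := by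
    intro v
    rw [diagBlock_mulVec_embL, smul_mulVec, map_smul]
    simpa only [LinearMap.comp_apply, LinearMap.smul_apply, LinearEquiv.coe_coe,
      toLin'_apply_eq_mulVec] using LinearMap.congr_fun hμ v
  refine ⟨a, μ, ext_of_mulVec_single fun j => ?_⟩
  refine Fin.cases ?_ (fun i => ?_) j
  · rw [diagBlock_mulVec_single_zero, ha]
  · rw [← embL_single, hline']

end BlockForm

section ControlGroup

variable {Γ : Subgroup (PSL 3)} {Φ : Γ →* PSL 2}

lemma coe_commutatorElement_eq_mk_blockEmbedding
    (hfix : ∀ γ ∈ Γ, γ • stdPt (0 : Fin 3) = stdPt (0 : Fin 3))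
    (hΦ : ∀ (γ : Γ) (x : Proj 2), (γ : PSL 3) • embP1 x = embP1 (Φ γ • x))
    {γ δ : Γ} {D E : SL 2}
    (hD : (QuotientGroup.mk D : PSL 2) = Φ γ) (hE : (QuotientGroup.mk E : PSL 2) = Φ δ) :
    ((⁅γ, δ⁆ : Γ) : PSL 3) = QuotientGroup.mk (blockEmbedding ⁅D, E⁆) := by
  obtain ⟨g, hg⟩ := QuotientGroup.mk_surjective (γ : PSL 3)
  obtain ⟨h, hh⟩ := QuotientGroup.mk_surjective (δ : PSL 3)
  obtain ⟨a, μ, hgD⟩ := exists_coe_eq_diagBlock (g := g) (D := D)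
    (by rw [hg]; exact hfix _ γ.2) (by rw [hg, hD]; exact hΦ γ)
  obtain ⟨b, ν, hhE⟩ := exists_coe_eq_diagBlock (g := h) (D := E)
    (by rw [hh]; exact hfix _ δ.2) (by rw [hh, hE]; exact hΦ δ)
  rw [← commutatorElement_eq_blockEmbedding hgD hhE, ← QuotientGroup.mk'_apply,
    map_commutatorElement, QuotientGroup.mk'_apply, QuotientGroup.mk'_apply, hg, hh]
  exact map_commutatorElement Γ.subtype γ δ

lemma eventually_commute_of_discreteTopology
    (hfix : ∀ γ ∈ Γ, γ • stdPt (0 : Fin 3) = stdPt (0 : Fin 3))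
    (hΦ : ∀ (γ : Γ) (x : Proj 2), (γ : PSL 3) • embP1 x = embP1 (Φ γ • x))
    (hdisc : DiscreteTopology Γ) {y : PSL 2} (hy : y ∈ Φ.range) :
    ∀ᶠ x in 𝓝 1, x ∈ Φ.range → Commute x y := by
  obtain ⟨δ, rfl⟩ := hy
  obtain ⟨E, hE⟩ := QuotientGroup.mk_surjective (Φ δ)
  set F : SL 2 → PSL 3 := fun D => QuotientGroup.mk (blockEmbedding ⁅D, E⁆)
  have hF : Tendsto F (𝓝 1) (𝓝 1) := by
    have hc : Continuous fun D : SL 2 => ⁅D, E⁆ := by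
      simp only [commutatorElement_def]
      exact ((continuous_id.mul continuous_const).mul continuous_inv).mul continuous_const
    have hcont : Continuous F :=
      QuotientGroup.continuous_mk.comp (continuous_blockEmbedding.comp hc)
    simpa [F] using hcont.tendsto 1
  have hΓ := hF.eventually ((Γ.discreteTopology_iff_eventually_eq_one).1 hdisc)
  rw [← QuotientGroup.mk_one, QuotientGroup.nhds_eq, Filter.eventually_map]
  filter_upwards [hΓ] with D hD
  rintro ⟨γ, hγ⟩
  have hFD : F D = ⁅γ, δ⁆ := (coe_commutatorElement_eq_mk_blockEmbedding hfix hΦ hγ.symm hE).symm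
  have h1 := eq_one_of_blockEmbedding_mem_center
    ((QuotientGroup.eq_one_iff _).1 (hD (hFD ▸ (⁅γ, δ⁆ : Γ).2)))
  rw [← hE]
  exact (commutatorElement_eq_one_iff_commute.1 h1).map
    (QuotientGroup.mk' (Subgroup.center (SL 2)))

end ControlGroup

theorem control_group_discrete_general (Γ : Subgroup (PSL 3)) (hdisc : DiscreteTopology Γ)
    (hfix : ∀ γ ∈ Γ, γ • stdPt (0 : Fin 3) = stdPt (0 : Fin 3))
    (Φ : Γ →* PSL 2)
    (hΦ : ∀ (γ : Γ) (x : Proj 2), (γ : PSL 3) • embP1 x = embP1 (Φ γ • x))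
    (hns : ¬ VirtuallySolvable Φ.range) :
    DiscreteTopology Φ.range := by
  by_contra hnd
  have hfreq : ∃ᶠ x in 𝓝 (1 : PSL 2), x ∈ Φ.range ∧ x ≠ 1 := by
    simpa [Φ.range.discreteTopology_iff_eventually_eq_one, Filter.not_eventually] using hnd
  have hcomm (y : Φ.range) := eventually_commute_of_discreteTopology hfix hΦ hdisc y.2
  have : Group.IsSolvable Φ.range := isSolvable_of_commute_commutatorElement fun a b c d => by
    obtain ⟨x, ⟨hxΦ, hx1⟩, ha, hb, hc, hd⟩ := (hfreq.and_eventually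
      ((hcomm a).and ((hcomm b).and ((hcomm c).and (hcomm d))))).exists
    have := Matrix.ProjectiveSpecialLinearGroup.commute_commutatorElement_of_commute hx1
      (ha hxΦ).symm (hb hxΦ).symm (hc hxΦ).symm (hd hxΦ).symm
    exact Subtype.ext (by simpa [commutatorElement_def] using this.eq)
  exact hns ⟨⊤, inferInstance, (inferInstance : Group.IsSolvable (⊤ : Subgroup Φ.range))⟩

/-- Suppose a discrete subgroup `Γ` of `PSL(3,ℂ)` fixes the point
`[e₁]`, leaves invariant the line `ℓ = {[0:z:w]}`, and the maximal number of lines in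
general position in its Kulkarni limit set is three.  If the control group, i.e. the
image of the restriction homomorphism `Γ → PSL(2,ℂ)` on `ℓ ≅ ℙ¹ℂ`, is not virtually
solvable, then it is discrete. -/
theorem control_group_discrete (Γ : Subgroup (PSL 3)) (hdisc : DiscreteTopology Γ)
    (hfix : ∀ γ ∈ Γ, γ • stdPt (0 : Fin 3) = stdPt (0 : Fin 3))
    (hline : ∀ γ ∈ Γ, γ • Set.range embP1 = Set.range embP1)
    (hmax : maxGenPos (Γ : Set (PSL 3)) 3)
    (Φ : Γ →* PSL 2)
    (hΦ : ∀ (γ : Γ) (x : Proj 2), (γ : PSL 3) • embP1 x = embP1 (Φ γ • x))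
    (hns : ¬ VirtuallySolvable Φ.range) :
    DiscreteTopology Φ.range :=
  control_group_discrete_general Γ hdisc hfix Φ hΦ hns
end
end
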